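/- The family (K_{0,1}(w)), indexed by all nonempty words w over the alphabet {2,3}, is linearly independent over ℚ in A; that is, the zinbiel subalgebra of A generated by δ_{(1,0)} and δ_{(1,1,0)} is free on these two generators. -/

import Mathlib

/-- Words over the alphabet `{0,1}`, encoded with `false` = `0` and `true` = `1`. -/
abbrev Word : Type := List Bool

/-- The ℚ-vector space `A` of finitely supported functions on words over `{0,1}`. -/
abbrev A01 : Type := Word →₀ ℚ

/-- The basis element `δ_x` of `A` attached to a word `x`. -/
noncomputable def δ (x : Word) : A01 := Finsupp.single x 1

/-- Prepend the letter `a` to every word of a formal sum. -/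
noncomputable def prependLetter (a : Bool) (f : A01) : A01 :=
  Finsupp.mapDomain (List.cons a) f

/-- The shuffle product of two words, as an element of `A`. -/
noncomputable def shuffle : Word → Word → A01
  | [], y => δ y
  | a :: x, [] => δ (a :: x)
  | a :: x, b :: y =>
      prependLetter a (shuffle x (b :: y)) + prependLetter b (shuffle (a :: x) y)
  termination_by x y => x.length + y.length

/-- The half-shuffle product on basis words: `δ_{a::x} ≺ δ_y = a·(x ш y)`, `δ_[] ≺ δ_y = 0`. -/
noncomputable def halfWord : Word → Word → A01
  | [], _ => 0
  | a :: x, y => prependLetter a (shuffle x y)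

/-- The half-shuffle (zinbiel) product `≺` on `A`, extended bilinearly from basis words. -/
noncomputable def half (f g : A01) : A01 :=
  f.sum fun x c => g.sum fun y d => (c * d) • halfWord x y

/-- The right-parenthesized product `K(a_1, …, a_n) = a_1 ≺ (a_2 ≺ (⋯ ≺ a_n))`,
with `K(a_n) = a_n`, and `δ_[]` (the shuffle unit) for the empty list. -/
noncomputable def Klist : List A01 → A01
  | [] => δ []
  | [a] => a
  | a :: b :: l => half a (Klist (b :: l))

/-- The generators `z_2 = δ_{(1,0)}` and `z_3 = u·δ_{(1,0,0)} + v·δ_{(1,1,0)}`;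
letters of the alphabet `{2,3}` are encoded with `false` = `2` and `true` = `3`. -/
noncomputable def zgen (u v : ℚ) : Bool → A01
  | false => δ [true, false]
  | true => u • δ [true, false, false] + v • δ [true, true, false]

/-- `K_{u,v}(w)` for a word `w` over `{2,3}` (encoded with `false` = `2`, `true` = `3`). -/
noncomputable def Kuv (u v : ℚ) (w : List Bool) : A01 :=
  Klist (w.map (zgen u v))

/-- The block substitution `2 ↦ (1,0)`, `3 ↦ (1,0,0)`. -/
def blocks0 (c : Bool) : Word := if c then [true, false, false] else [true, false]

/-- The block substitution `2 ↦ (1,0)`, `3 ↦ (1,1,0)`. -/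
def blocks1 (c : Bool) : Word := if c then [true, true, false] else [true, false]

/-- `cat₀(w)`: substitute `2 ↦ (1,0)`, `3 ↦ (1,0,0)` and concatenate. -/
def cat0 (w : List Bool) : Word := (w.map blocks0).flatten

/-- `cat₁(w)`: substitute `2 ↦ (1,0)`, `3 ↦ (1,1,0)` and concatenate. -/
def cat1 (w : List Bool) : Word := (w.map blocks1).flatten

/-- A good-shuffle realizing the word `x` from the words `ws = (w^1, …, w^n)`:
a partition `S` of the positions of `x`, reading `x` along `S j` gives `w^j`,
and the minima of the parts are in increasing order. -/
def GoodShuffle (ws : List Word) (x : Word)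
    (S : Fin ws.length → Finset (Fin x.length)) : Prop :=
  (∀ p : Fin x.length, ∃! j, p ∈ S j) ∧
  (∀ j, ((S j).sort (· ≤ ·)).map x.get = ws.get j) ∧
  (∀ j k, j < k → (S j).min < (S k).min)

/-- The weight of a word over `{2,3}`: the sum of its letters. -/
def wt (w : List Bool) : ℕ := (w.map fun c => if c then 3 else 2).sum

/-!
Order words over `{0,1}` lexicographically, with `0 < 1`. Shuffles and half-shuffles of
nonnegative elements have nonnegative coefficients, so no cancellation occurs and supports can be
tracked word by word. Writing `cat₁(w)` for the concatenation of the blocks `10` (for `2`) and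
`110` (for `3`), the support of `K_{0,1}(w)` has least element `cat₁(w)`. The inductive step
rests on two facts: every insertion of `0` into `y` is at least `0y`, and every shuffle of `10`
into a word `y ≥ cat₁(w)` of the same length is at least `10 cat₁(w)`. As `cat₁` is injective, the
family is triangular with respect to the lexicographic order, hence linearly independent.
-/

open Finsupp

theorem List.cons_le_cons_iff' {α : Type*} [LinearOrder α] {a b : α} {l m : List α} :
    a :: l ≤ b :: m ↔ a < b ∨ a = b ∧ l ≤ m := by
  simp only [← not_lt]
  exact List.cons_le_cons_iff

theorem Finsupp.mem_support_add_of_nonneg {ι M : Type*} [AddCommMonoid M] [PartialOrder M]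
    [IsOrderedAddMonoid M] {f g : ι →₀ M} (hf : 0 ≤ f) (hg : 0 ≤ g) {i : ι} :
    i ∈ (f + g).support ↔ i ∈ f.support ∨ i ∈ g.support := by
  simp only [mem_support_iff, add_apply, ne_eq, add_eq_zero_iff_of_nonneg (hf i) (hg i),
    not_and_or]

theorem Finsupp.linearIndependent_of_isLeast_support {ι α R : Type*} [PartialOrder α] [Ring R]
    [NoZeroDivisors R] {v : ι → α →₀ R} {ℓ : ι → α} (hℓ : Function.Injective ℓ)
    (hv : ∀ i, IsLeast ((v i).support : Set α) (ℓ i)) : LinearIndependent R v := by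
  classical
  rw [linearIndependent_iff']
  intro s g hsum i hi
  by_contra hgi
  obtain ⟨j, hj, hmin⟩ := (s.filter (g · ≠ 0)).exists_minimalFor ℓ ⟨i, by simp [hi, hgi]⟩
  obtain ⟨hjs, hgj⟩ := Finset.mem_filter.1 hj
  have hcoef : (∑ k ∈ s, g k • v k) (ℓ j) = g j * v j (ℓ j) := by
    rw [finsetSum_apply, Finset.sum_eq_single_of_mem j hjs fun k hks hkj => ?_, smul_apply,
      smul_eq_mul]
    by_cases hgk : g k = 0
    · simp [hgk]
    have hvk : v k (ℓ j) = 0 := by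
      by_contra hne
      have hle : ℓ k ≤ ℓ j := (hv k).2 (mem_support_iff.2 hne)
      exact hkj (hℓ (le_antisymm hle (hmin (by simp [hks, hgk]) hle)))
    simp [hvk]
  rw [hsum] at hcoef
  exact mul_ne_zero hgj (mem_support_iff.1 (hv j).1) hcoef.symm

theorem mem_support_δ {x z : Word} : z ∈ (δ x).support ↔ z = x := by
  simp [δ]

theorem δ_nonneg (x : Word) : 0 ≤ δ x :=
  single_nonneg.2 zero_le_one

theorem prependLetter_δ (a : Bool) (x : Word) : prependLetter a (δ x) = δ (a :: x) :=
  mapDomain_single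

theorem mem_support_prependLetter {a : Bool} {f : A01} {z : Word} :
    z ∈ (prependLetter a f).support ↔ ∃ t ∈ f.support, a :: t = z := by
  classical
  rw [prependLetter, mapDomain_support_of_injective List.cons_injective, Finset.mem_image]

theorem prependLetter_nonneg (a : Bool) {f : A01} (hf : 0 ≤ f) : 0 ≤ prependLetter a f :=
  mapDomain_nonneg hf

theorem shuffle_nil_left (y : Word) : shuffle [] y = δ y := by
  rw [shuffle]

theorem shuffle_nil_right (x : Word) : shuffle x [] = δ x := by
  cases x <;> rw [shuffle]

theorem shuffle_cons_cons (a b : Bool) (x y : Word) :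
    shuffle (a :: x) (b :: y) =
      prependLetter a (shuffle x (b :: y)) + prependLetter b (shuffle (a :: x) y) := by
  rw [shuffle]

theorem shuffle_nonneg : ∀ x y : Word, 0 ≤ shuffle x y
  | [], y => by rw [shuffle_nil_left]; exact δ_nonneg y
  | a :: x, [] => by rw [shuffle_nil_right]; exact δ_nonneg _
  | a :: x, b :: y => by
      rw [shuffle_cons_cons]
      exact add_nonneg (prependLetter_nonneg a (shuffle_nonneg x _))
        (prependLetter_nonneg b (shuffle_nonneg _ y))
termination_by x y => x.length + y.length

theorem mem_support_shuffle_cons_cons {a b : Bool} {x y z : Word} :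
    z ∈ (shuffle (a :: x) (b :: y)).support ↔
      (∃ t ∈ (shuffle x (b :: y)).support, a :: t = z) ∨
        ∃ t ∈ (shuffle (a :: x) y).support, b :: t = z := by
  rw [shuffle_cons_cons, mem_support_add_of_nonneg (prependLetter_nonneg _ (shuffle_nonneg _ _))
    (prependLetter_nonneg _ (shuffle_nonneg _ _)), mem_support_prependLetter,
    mem_support_prependLetter]

theorem append_mem_support_shuffle : ∀ x y : Word, x ++ y ∈ (shuffle x y).support
  | [], y => by rw [shuffle_nil_left, mem_support_δ]; rfl
  | a :: x, [] => by rw [shuffle_nil_right, mem_support_δ, List.append_nil]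
  | a :: x, b :: y =>
      mem_support_shuffle_cons_cons.2 (.inl ⟨_, append_mem_support_shuffle x _, rfl⟩)

theorem length_of_mem_support_shuffle :
    ∀ {x y z : Word}, z ∈ (shuffle x y).support → z.length = x.length + y.length
  | [], y, z, h => by rw [shuffle_nil_left, mem_support_δ] at h; simp [h]
  | a :: x, [], z, h => by rw [shuffle_nil_right, mem_support_δ] at h; simp [h]
  | a :: x, b :: y, z, h => by
      rcases mem_support_shuffle_cons_cons.1 h with ⟨t, ht, rfl⟩ | ⟨t, ht, rfl⟩ <;>
        simp [length_of_mem_support_shuffle ht] <;> omega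
termination_by x y => x.length + y.length

theorem false_cons_le_of_mem_support_shuffle :
    ∀ {y z : Word}, z ∈ (shuffle [false] y).support → false :: y ≤ z
  | [], z, h => by
      rw [shuffle_nil_right, mem_support_δ] at h
      exact h.ge
  | b :: y, z, h => by
      rcases mem_support_shuffle_cons_cons.1 h with ⟨t, ht, rfl⟩ | ⟨t, ht, rfl⟩
      · rw [shuffle_nil_left, mem_support_δ] at ht
        rw [ht]
      · have := false_cons_le_of_mem_support_shuffle ht
        cases b <;> simp [List.cons_le_cons_iff', this]

theorem exists_eq_true_cons_of_true_cons_le {c y : List Bool} (h : true :: c ≤ y) :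
    ∃ yt, y = true :: yt ∧ c ≤ yt := by
  rcases y with _ | ⟨_ | _, yt⟩
  · exact absurd h (by simp [← not_lt])
  · simp [List.cons_le_cons_iff', Bool.lt_iff] at h
  · exact ⟨yt, rfl, by simpa [List.cons_le_cons_iff'] using h⟩

theorem blocks1_eq_true_cons_tail (a : Bool) : blocks1 a = true :: (blocks1 a).tail := by
  cases a <;> rfl

theorem cat1_cons (a : Bool) (w : List Bool) :
    cat1 (a :: w) = true :: ((blocks1 a).tail ++ cat1 w) := by
  cases a <;> simp [cat1, blocks1]

theorem true_false_cat1_le_of_mem_support_shuffle : ∀ (w : List Bool) {y z : Word},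
    cat1 w ≤ y → y.length = (cat1 w).length →
      z ∈ (shuffle [true, false] y).support → true :: false :: cat1 w ≤ z
  | [], y, z, _, hlen, hz => by
      obtain rfl : y = [] := List.eq_nil_of_length_eq_zero (by simpa [cat1] using hlen)
      rw [shuffle_nil_right, mem_support_δ] at hz
      simp [hz, cat1]
  | d :: w, y, z, hle, hlen, hz => by
      obtain ⟨yt, rfl, hyt⟩ := exists_eq_true_cons_of_true_cons_le (cat1_cons d w ▸ hle)
      rcases mem_support_shuffle_cons_cons.1 hz with ⟨t, ht, rfl⟩ | ⟨t, ht, rfl⟩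
      · exact List.cons_le_cons _ <|
          (List.cons_le_cons _ hle).trans (false_cons_le_of_mem_support_shuffle ht)
      -- Here the leading `1` of `z` comes from `y`. The rest `t` starts with `1` unless its first
      -- letter is a `0` of `y`; then `y = 1 0 y'`, which forces `d = 2`, and we recurse on `y'`.
      refine List.cons_le_cons _ ?_
      rcases yt with _ | ⟨_ | _, y'⟩
      · rw [shuffle_nil_right, mem_support_δ] at ht
        simp [ht, List.cons_le_cons_iff']
      · rcases mem_support_shuffle_cons_cons.1 ht with ⟨t', -, rfl⟩ | ⟨t', ht', rfl⟩
        · simp [List.cons_le_cons_iff']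
        cases d
        · have hw : cat1 w ≤ y' := by simpa [blocks1, List.cons_le_cons_iff'] using hyt
          have := true_false_cat1_le_of_mem_support_shuffle w hw
            (by simpa [cat1_cons, blocks1] using hlen) ht'
          simpa [cat1_cons, blocks1, List.cons_le_cons_iff'] using this
        · simp [blocks1, List.cons_le_cons_iff', Bool.lt_iff] at hyt
      · rcases mem_support_shuffle_cons_cons.1 ht with ⟨t', -, rfl⟩ | ⟨t', -, rfl⟩ <;>
          simp [List.cons_le_cons_iff']

theorem blocks1_tail_append_le_of_mem_support_shuffle (a : Bool) {w : List Bool} {y z : Word}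
    (hle : cat1 w ≤ y) (hlen : y.length = (cat1 w).length)
    (hz : z ∈ (shuffle (blocks1 a).tail y).support) : (blocks1 a).tail ++ cat1 w ≤ z := by
  cases a
  · exact (List.cons_le_cons _ hle).trans (false_cons_le_of_mem_support_shuffle hz)
  · exact true_false_cat1_le_of_mem_support_shuffle w hle hlen hz

theorem half_δ (x : Word) (g : A01) : half (δ x) g = g.sum fun y d => d • halfWord x y := by
  simp [half, δ, sum_single_index]

theorem halfWord_nonneg : ∀ x y : Word, 0 ≤ halfWord x y
  | [], _ => le_rfl
  | a :: x, y => prependLetter_nonneg a (shuffle_nonneg x y)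

theorem half_nonneg {f g : A01} (hf : 0 ≤ f) (hg : 0 ≤ g) : 0 ≤ half f g :=
  Finset.sum_nonneg fun x _ => Finset.sum_nonneg fun y _ =>
    smul_nonneg (mul_nonneg (hf x) (hg y)) (halfWord_nonneg x y)

theorem mem_support_half_δ {x z : Word} {g : A01} (hg : 0 ≤ g) :
    z ∈ (half (δ x) g).support ↔ ∃ y ∈ g.support, z ∈ (halfWord x y).support := by
  simp_rw [half_δ, mem_support_iff, Finsupp.sum_apply, Finsupp.sum, Finsupp.smul_apply,
    smul_eq_mul]
  rw [Ne, Finset.sum_eq_zero_iff_of_nonneg fun y _ => mul_nonneg (hg y) (halfWord_nonneg x y z)]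
  push Not
  simp only [mem_support_iff, mul_ne_zero_iff, and_self_left]

theorem half_δ_δ (x y : Word) : half (δ x) (δ y) = halfWord x y := by
  simp [half, δ, sum_single_index]

theorem zgen_zero_one (a : Bool) : zgen 0 1 a = δ (blocks1 a) := by
  cases a <;> simp [zgen, blocks1]

theorem Kuv_zero_one_nil : Kuv 0 1 [] = δ [] := rfl

theorem Kuv_zero_one_cons (a : Bool) (w : List Bool) :
    Kuv 0 1 (a :: w) = half (δ (blocks1 a)) (Kuv 0 1 w) := by
  cases w with
  | nil =>
    rw [Kuv_zero_one_nil, half_δ_δ]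
    cases a <;>
      simp [Kuv, Klist, zgen_zero_one, blocks1, halfWord, shuffle_nil_right, prependLetter_δ]
  | cons b w => rw [Kuv, List.map_cons, List.map_cons, Klist, zgen_zero_one, Kuv, List.map_cons]

theorem Kuv_zero_one_nonneg : ∀ w : List Bool, 0 ≤ Kuv 0 1 w
  | [] => δ_nonneg []
  | a :: w => by
      rw [Kuv_zero_one_cons]
      exact half_nonneg (δ_nonneg _) (Kuv_zero_one_nonneg w)

theorem mem_support_Kuv_zero_one_cons {a : Bool} {w : List Bool} {z : Word} :
    z ∈ (Kuv 0 1 (a :: w)).support ↔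
      ∃ y ∈ (Kuv 0 1 w).support, ∃ t ∈ (shuffle (blocks1 a).tail y).support, true :: t = z := by
  rw [Kuv_zero_one_cons, mem_support_half_δ (Kuv_zero_one_nonneg w), blocks1_eq_true_cons_tail a]
  simp only [halfWord, List.tail_cons, mem_support_prependLetter]

theorem cat1_mem_support_Kuv_zero_one : ∀ w : List Bool, cat1 w ∈ (Kuv 0 1 w).support
  | [] => mem_support_δ.2 rfl
  | a :: w => mem_support_Kuv_zero_one_cons.2 ⟨cat1 w, cat1_mem_support_Kuv_zero_one w, _,
      append_mem_support_shuffle _ _, (cat1_cons a w).symm⟩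

theorem cat1_le_and_length_eq_of_mem_support_Kuv_zero_one :
    ∀ (w : List Bool) {z : Word}, z ∈ (Kuv 0 1 w).support →
      cat1 w ≤ z ∧ z.length = (cat1 w).length
  | [], z, hz => by
      rw [Kuv_zero_one_nil, mem_support_δ] at hz
      exact ⟨hz.ge, congrArg _ hz⟩
  | a :: w, z, hz => by
      obtain ⟨y, hy, t, ht, rfl⟩ := mem_support_Kuv_zero_one_cons.1 hz
      obtain ⟨hle, hlen⟩ := cat1_le_and_length_eq_of_mem_support_Kuv_zero_one w hy
      rw [cat1_cons]
      refine ⟨List.cons_le_cons _ (blocks1_tail_append_le_of_mem_support_shuffle a hle hlen ht), ?_⟩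
      simp [length_of_mem_support_shuffle ht, hlen]

theorem isLeast_support_Kuv_zero_one (w : List Bool) :
    IsLeast ((Kuv 0 1 w).support : Set Word) (cat1 w) :=
  ⟨cat1_mem_support_Kuv_zero_one w, fun _ hz =>
    (cat1_le_and_length_eq_of_mem_support_Kuv_zero_one w hz).1⟩

theorem cat1_injective : Function.Injective cat1 := by
  intro w
  induction w with
  | nil =>
    rintro (_ | ⟨b, w'⟩) h
    · rfl
    · rw [cat1_cons] at h
      cases h
  | cons a w ih =>
    rintro (_ | ⟨b, w'⟩) h
    · rw [cat1_cons] at h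
      cases h
    · cases a <;> cases b <;> simp [cat1_cons, blocks1] at h <;> rw [ih h]

theorem Kuv_zero_one_linearIndependent : LinearIndependent ℚ (Kuv 0 1) :=
  linearIndependent_of_isLeast_support cat1_injective isLeast_support_Kuv_zero_one

/-- The family `K_{0,1}(w)`, indexed by nonempty words `w` over `{2,3}`
(encoded with `false` = `2`, `true` = `3`), is linearly independent over `ℚ` in `A`:
the zinbiel subalgebra generated by `δ_{(1,0)}` and `δ_{(1,1,0)}` is free on these generators. -/
theorem K01_linearIndependent :
    LinearIndependent ℚ (fun w : {l : List Bool // l ≠ []} => Kuv 0 1 w.1) :=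
  Kuv_zero_one_linearIndependent.comp _ Subtype.val_injective
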